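/- There is a universal constant c > 0 such that for every x ≤ 0 and t > 0, Φ(x − t) ≤ exp(−c(1+|x|)t) Φ(x), where Φ is the standard normal cdf. -/
import Mathlib


open MeasureTheory

/-- The standard normal density. -/
noncomputable def gaussPdf (x : ℝ) : ℝ :=
  (Real.sqrt (2 * Real.pi))⁻¹ * Real.exp (-x ^ 2 / 2)

/-- The standard normal cumulative distribution function. -/
noncomputable def gaussCdf (x : ℝ) : ℝ := ∫ u in Set.Iic x, gaussPdf u

lemma gaussPdf_pos (x : ℝ) : 0 < gaussPdf x := by
  unfold gaussPdf
  positivity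

lemma integrable_gaussPdf : Integrable gaussPdf := by
  have h : gaussPdf = fun x => (Real.sqrt (2 * Real.pi))⁻¹ * Real.exp (-(1/2) * x ^ 2) := by
    funext x; unfold gaussPdf; ring_nf
  rw [h]
  exact (integrable_exp_neg_mul_sq (by norm_num)).const_mul _

lemma integral_gaussPdf : ∫ x, gaussPdf x = 1 := by
  have h : ∀ x, gaussPdf x = (Real.sqrt (2 * Real.pi))⁻¹ * Real.exp (-(1/2) * x ^ 2) := by
    intro x; unfold gaussPdf; ring_nf
  simp_rw [h]
  rw [MeasureTheory.integral_const_mul, integral_gaussian]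
  have : Real.sqrt (Real.pi / (1/2)) = Real.sqrt (2 * Real.pi) := by norm_num [mul_comm]
  rw [this, inv_mul_cancel₀ (by positivity)]

lemma gaussCdf_nonneg (x : ℝ) : 0 ≤ gaussCdf x :=
  setIntegral_nonneg measurableSet_Iic fun u _ => (gaussPdf_pos u).le

lemma gaussCdf_le_one (x : ℝ) : gaussCdf x ≤ 1 := by
  rw [← integral_gaussPdf]
  exact setIntegral_le_integral integrable_gaussPdf
    (Filter.Eventually.of_forall fun u => (gaussPdf_pos u).le)

lemma gaussCdf_shift (x t : ℝ) : gaussCdf (x - t) = ∫ u in Set.Iic x, gaussPdf (u - t) := by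
  unfold gaussCdf
  rw [← integral_indicator measurableSet_Iic, ← integral_indicator measurableSet_Iic,
    ← integral_sub_right_eq_self (fun u => (Set.Iic (x - t)).indicator gaussPdf u) t]
  congr 1
  funext u
  by_cases h : u ≤ x <;>
    simp [Set.indicator_apply, Set.mem_Iic, h, sub_le_sub_iff_right]

lemma gaussPdf_shift_eq (u t : ℝ) :
    gaussPdf (u - t) = Real.exp (u * t - t ^ 2 / 2) * gaussPdf u := by
  unfold gaussPdf
  rw [← mul_assoc, mul_comm (Real.exp _), mul_assoc, ← Real.exp_add]
  ring_nf

lemma boundA {x : ℝ} (hx : x ≤ 0) {t : ℝ} (ht : 0 ≤ t) :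
    gaussCdf (x - t) ≤ Real.exp (x * t - t ^ 2 / 2) * gaussCdf x := by
  rw [gaussCdf_shift]
  calc ∫ u in Set.Iic x, gaussPdf (u - t)
      ≤ ∫ u in Set.Iic x, Real.exp (x * t - t ^ 2 / 2) * gaussPdf u := by
        apply setIntegral_mono_on
        · exact (integrable_gaussPdf.comp_sub_right t).integrableOn
        · exact (integrable_gaussPdf.const_mul _).integrableOn
        · exact measurableSet_Iic
        · intro u hu
          rw [gaussPdf_shift_eq]
          have : Real.exp (u * t - t ^ 2 / 2) ≤ Real.exp (x * t - t ^ 2 / 2) := by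
            apply Real.exp_le_exp.mpr
            have : u ≤ x := hu
            nlinarith
          exact mul_le_mul_of_nonneg_right this (gaussPdf_pos u).le
    _ = Real.exp (x * t - t ^ 2 / 2) * gaussCdf x := MeasureTheory.integral_const_mul _ _

lemma gaussPdf_two_ge : 1 / 24 ≤ gaussPdf 2 := by
  unfold gaussPdf
  have hsqrt : Real.sqrt (2 * Real.pi) ≤ 2.51 := by
    rw [Real.sqrt_le_iff]
    constructor
    · norm_num
    · nlinarith [Real.pi_lt_d2]
  have hexp : Real.exp 2 ≤ 7.39 := by
    have h1 : Real.exp 2 = Real.exp 1 ^ 2 := by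
      rw [← Real.exp_nat_mul]; norm_num
    nlinarith [Real.exp_one_lt_d9, Real.exp_pos 1]
  have h2 : Real.exp (-(2:ℝ) ^ 2 / 2) = (Real.exp 2)⁻¹ := by
    rw [← Real.exp_neg]; norm_num
  rw [h2]
  have hs : (0:ℝ) < Real.sqrt (2 * Real.pi) := Real.sqrt_pos.mpr (by positivity)
  have hep : (0:ℝ) < Real.exp 2 := Real.exp_pos 2
  rw [← mul_inv]
  calc (1:ℝ) / 24 ≤ (2.51 * 7.39)⁻¹ := by norm_num
    _ ≤ (Real.sqrt (2 * Real.pi) * Real.exp 2)⁻¹ := by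
        apply inv_anti₀ (by positivity)
        exact mul_le_mul hsqrt hexp hep.le (by norm_num)

lemma boundB {x t : ℝ} (hx1 : -1 ≤ x) (hx0 : x ≤ 0) (ht : 0 < t) (ht1 : t ≤ 1) :
    (1 + gaussPdf 2 * t) * gaussCdf (x - t) ≤ gaussCdf x := by
  have hIic : ∀ y : ℝ, IntegrableOn gaussPdf (Set.Iic y) := fun y =>
    integrable_gaussPdf.integrableOn
  have hsub : gaussCdf x - gaussCdf (x - t) = ∫ u in (x - t)..x, gaussPdf u := by
    unfold gaussCdf
    exact intervalIntegral.integral_Iic_sub_Iic (hIic _) (hIic _)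
  have hmono : ∀ u ∈ Set.Icc (x - t) x, gaussPdf 2 ≤ gaussPdf u := by
    intro u hu
    unfold gaussPdf
    have h1 : x - t ≤ u := hu.1
    have h2 : u ≤ x := hu.2
    have : Real.exp (-(2:ℝ) ^ 2 / 2) ≤ Real.exp (-u ^ 2 / 2) := by
      apply Real.exp_le_exp.mpr; nlinarith
    exact mul_le_mul_of_nonneg_left this (by positivity)
  have hlow : t * gaussPdf 2 ≤ ∫ u in (x - t)..x, gaussPdf u := by
    have : ∫ u in (x - t)..x, gaussPdf 2 ≤ ∫ u in (x - t)..x, gaussPdf u := by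
      apply intervalIntegral.integral_mono_on (by linarith)
        (intervalIntegrable_const) (integrable_gaussPdf.intervalIntegrable) hmono
    simpa using this
  have hcdf1 : gaussCdf (x - t) ≤ 1 := gaussCdf_le_one _
  have hpdf2 : 1 / 24 ≤ gaussPdf 2 := gaussPdf_two_ge
  have hp2 : (0:ℝ) ≤ gaussPdf 2 := (gaussPdf_pos 2).le
  have key : gaussPdf 2 * t * gaussCdf (x - t) ≤ gaussPdf 2 * t * 1 :=
    mul_le_mul_of_nonneg_left hcdf1 (by positivity)
  nlinarith [gaussCdf_nonneg (x - t)]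

lemma gaussPdf_two_le : gaussPdf 2 ≤ 1 := by
  unfold gaussPdf
  have h1 : (Real.sqrt (2 * Real.pi))⁻¹ ≤ 1 := by
    rw [inv_le_one_iff₀]
    right
    rw [Real.one_le_sqrt] <;> nlinarith [Real.pi_gt_three]
  have h2 : Real.exp (-(2:ℝ) ^ 2 / 2) ≤ 1 := by
    rw [← Real.exp_zero]
    apply Real.exp_le_exp.mpr; norm_num
  nlinarith [Real.exp_pos (-(2:ℝ) ^ 2 / 2), Real.sqrt_pos.mpr (show (0:ℝ) < 2 * Real.pi by positivity)]

/-- There is a universal constant `c > 0` such that for every `x ≤ 0` and `t > 0`,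
`Φ(x − t) ≤ exp(−c(1+|x|)t) Φ(x)`. -/
theorem gaussCdf_shift_bound :
    ∃ c : ℝ, 0 < c ∧ ∀ x : ℝ, x ≤ 0 → ∀ t : ℝ, 0 < t →
      gaussCdf (x - t) ≤ Real.exp (-c * (1 + |x|) * t) * gaussCdf x := by
  refine ⟨1/50, by norm_num, fun x hx t ht => ?_⟩
  rw [abs_of_nonpos hx]
  by_cases hcase : 1 ≤ t ∨ x ≤ -1
  · refine le_trans (boundA hx ht.le) ?_
    apply mul_le_mul_of_nonneg_right _ (gaussCdf_nonneg x)
    apply Real.exp_le_exp.mpr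
    rcases hcase with h | h
    · nlinarith
    · nlinarith
  · push_neg at hcase
    obtain ⟨ht1, hx1⟩ := hcase
    have hB := boundB hx1.le hx ht ht1.le
    set a := gaussPdf 2 with ha
    have ha24 : 1 / 24 ≤ a := gaussPdf_two_ge
    have ha1 : a ≤ 1 := gaussPdf_two_le
    set s := (1/50 : ℝ) * (1 + -x) * t with hs
    have hs_pos : 0 < s := by
      apply mul_pos (mul_pos (by norm_num) (by linarith)) ht
    have hs_small : s ≤ t / 25 := by
      rw [hs]; nlinarith
    have h1s : 1 - s ≤ Real.exp (-s) := by
      have := Real.add_one_le_exp (-s); linarith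
    have hkey : Real.exp s ≤ 1 + a * t := by
      have hexp1 : Real.exp s * (1 - s) ≤ 1 := by
        calc Real.exp s * (1 - s) ≤ Real.exp s * Real.exp (-s) :=
              mul_le_mul_of_nonneg_left h1s (Real.exp_pos s).le
          _ = 1 := by rw [← Real.exp_add]; simp
      have hat : (0:ℝ) ≤ 1 + a * t := by nlinarith
      have e1 : s * (1 + a * t) ≤ (t/25) * (1 + a * t) :=
        mul_le_mul_of_nonneg_right hs_small hat
      have e2 : (t/25) * (1 + a * t) ≤ (t/25) * (1 + a) := by
        nlinarith [mul_nonneg (mul_nonneg ht.le (by linarith : (0:ℝ) ≤ a))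
          (by linarith : (0:ℝ) ≤ 1 - t)]
      have e3 : (t/25) * (1 + a) ≤ a * t := by
        nlinarith [mul_nonneg ht.le (by linarith : (0:ℝ) ≤ 24 * a - 1)]
      have hprod : 1 ≤ (1 - s) * (1 + a * t) := by nlinarith
      have h1spos : 0 < 1 - s := by nlinarith
      nlinarith [Real.exp_pos s]
    have h1 : Real.exp s * gaussCdf (x - t) ≤ gaussCdf x := by
      calc Real.exp s * gaussCdf (x - t) ≤ (1 + a * t) * gaussCdf (x - t) :=
            mul_le_mul_of_nonneg_right hkey (gaussCdf_nonneg _)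
        _ ≤ gaussCdf x := hB
    have hgoal : Real.exp (-(1/50 : ℝ) * (1 + -x) * t) = Real.exp (-s) := by
      rw [hs]; ring_nf
    rw [hgoal]
    calc gaussCdf (x - t) = Real.exp (-s) * (Real.exp s * gaussCdf (x - t)) := by
          rw [← mul_assoc, ← Real.exp_add]; simp
      _ ≤ Real.exp (-s) * gaussCdf x :=
          mul_le_mul_of_nonneg_left h1 (Real.exp_pos _).le
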